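/- arXiv:math/0503735 — 6 statements merged into one kernel-verified Lean document; each statement's English description precedes it below -/
import Mathlib

section
/- Rank-one Bernstein–Sato type formula: let ι, b > 0, ρ = ι + b, and let D be the operator acting on smooth even functions f on ℝ by (Df)(t) = f′(t) + (2ι·(e^{2t}/(e^{2t} − e^{−2t})) + 2b·(e^t/(e^t − e^{−t})))·(f(t) − f(−t)) − ρ·f(t). Then for every real δ, applying D² − (δ+ρ)² to the function f_δ(t) = (cosh t)^δ yields δ·(1 − δ − ι)·(cosh t)^{δ−2} for all t ≠ 0. -/
/-- The BC₁ Cherednik operator with multiplicity parameters ι, b. -/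
noncomputable def cherednikBC1 (ι b : ℝ) (f : ℝ → ℝ) : ℝ → ℝ := fun t =>
  deriv f t +
    (2 * ι * (Real.exp (2 * t) / (Real.exp (2 * t) - Real.exp (-(2 * t)))) +
      2 * b * (Real.exp t / (Real.exp t - Real.exp (-t)))) * (f t - f (-t)) -
    (ι + b) * f t

/-!
On even functions the reflection term of `cherednikBC1` vanishes, so `D f_δ` is the first-order
expression `δ cosh^(δ-1) sinh - ρ cosh^δ`, whose odd part is `2 sinh · δ cosh^(δ-1)`. Writing
`e^t = cosh t + sinh t`, the singular coefficients times `sinh t` become regular, and the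
remaining identity, after factoring out `cosh^(δ-2)`, is `sinh² = cosh² - 1`.
-/

open Real

namespace CherednikBC1

variable (ι b : ℝ)

theorem apply_of_even {f : ℝ → ℝ} (hf : Function.Even f) (t : ℝ) :
    cherednikBC1 ι b f t = deriv f t - (ι + b) * f t := by
  simp only [cherednikBC1, hf t, sub_self, mul_zero, add_zero]

theorem coeff_mul_sinh {t : ℝ} (ht : t ≠ 0) :
    (2 * ι * (exp (2 * t) / (exp (2 * t) - exp (-(2 * t)))) +
        2 * b * (exp t / (exp t - exp (-t)))) * sinh t
      = ι * exp (2 * t) / (2 * cosh t) + b * exp t := by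
  have hS : sinh t ≠ 0 := sinh_ne_zero.mpr ht
  have hC : cosh t ≠ 0 := (cosh_pos t).ne'
  have h1 : exp t - exp (-t) = 2 * sinh t := by rw [sinh_eq]; ring
  have h2 : exp (2 * t) - exp (-(2 * t)) = 4 * sinh t * cosh t := by
    rw [show exp (2 * t) - exp (-(2 * t)) = 2 * sinh (2 * t) by rw [sinh_eq]; ring, sinh_two_mul]
    ring
  rw [h1, h2]
  field_simp
  ring

theorem apply_of_sub_neg_eq {f : ℝ → ℝ} {t : ℝ} (ht : t ≠ 0) (u : ℝ)
    (hu : f t - f (-t) = 2 * sinh t * u) :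
    cherednikBC1 ι b f t
      = deriv f t + (ι * exp (2 * t) / cosh t + 2 * b * exp t) * u - (ι + b) * f t := by
  simp only [cherednikBC1, hu]
  linear_combination (2 * u) * coeff_mul_sinh ι b ht

end CherednikBC1

theorem hasDerivAt_cosh_rpow (δ s : ℝ) :
    HasDerivAt (fun s => cosh s ^ δ) (δ * cosh s ^ (δ - 1) * sinh s) s := by
  simpa [mul_comm, mul_assoc, mul_left_comm] using
    (hasDerivAt_cosh s).rpow_const (p := δ) (Or.inl (cosh_pos s).ne')

theorem cherednikBC1_cosh_rpow (ι b δ : ℝ) :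
    cherednikBC1 ι b (fun s => cosh s ^ δ)
      = fun s => δ * cosh s ^ (δ - 1) * sinh s - (ι + b) * cosh s ^ δ := by
  funext s
  rw [CherednikBC1.apply_of_even ι b (fun s => by simp only [cosh_neg]),
    (hasDerivAt_cosh_rpow δ s).deriv]

theorem hasDerivAt_cherednikBC1_cosh_rpow (ι b δ t : ℝ) :
    HasDerivAt (cherednikBC1 ι b fun s => cosh s ^ δ)
      (δ * ((δ - 1) * cosh t ^ (δ - 2) * sinh t * sinh t + cosh t ^ (δ - 1) * cosh t)
        - (ι + b) * (δ * cosh t ^ (δ - 1) * sinh t)) t := by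
  have := (((hasDerivAt_cosh_rpow (δ - 1) t).mul (hasDerivAt_sinh t)).const_mul δ).sub
    ((hasDerivAt_cosh_rpow δ t).const_mul (ι + b))
  rw [show δ - 1 - 1 = δ - 2 by ring] at this
  rw [cherednikBC1_cosh_rpow]
  refine this.congr_of_eventuallyEq (Filter.Eventually.of_forall fun s => ?_)
  simp only [Pi.sub_apply, Pi.mul_apply, mul_assoc]

theorem bernstein_sato_BC1_general (ι b : ℝ) (δ : ℝ)
    (t : ℝ) (ht : t ≠ 0) :
    cherednikBC1 ι b (cherednikBC1 ι b (fun s => Real.cosh s ^ δ)) t -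
        (δ + (ι + b)) ^ 2 * Real.cosh t ^ δ
      = δ * (1 - δ - ι) * Real.cosh t ^ (δ - 2) := by
  have hC : cosh t ≠ 0 := (cosh_pos t).ne'
  rw [CherednikBC1.apply_of_sub_neg_eq ι b ht (δ * cosh t ^ (δ - 1))
      (by simp only [cherednikBC1_cosh_rpow, cosh_neg, sinh_neg]; ring),
    (hasDerivAt_cherednikBC1_cosh_rpow ι b δ t).deriv]
  simp only [cherednikBC1_cosh_rpow]
  have hexp : exp t = cosh t + sinh t := (cosh_add_sinh t).symm
  have hexp2 : exp (2 * t) = (cosh t + sinh t) ^ 2 := by rw [two_mul, exp_add, hexp]; ring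
  have hpow1 : cosh t ^ (δ - 1) = cosh t ^ (δ - 2) * cosh t := by
    rw [← rpow_add_one hC]; ring_nf
  have hpow0 : cosh t ^ δ = cosh t ^ (δ - 2) * cosh t ^ 2 := by
    rw [← rpow_natCast, ← rpow_add (cosh_pos t)]; norm_num
  rw [hexp, hexp2, hpow1, hpow0]
  have hcancel : ι * (cosh t + sinh t) ^ 2 / cosh t * (δ * (cosh t ^ (δ - 2) * cosh t))
      = ι * δ * cosh t ^ (δ - 2) * (cosh t + sinh t) ^ 2 := by
    field_simp
  linear_combination hcancel + (δ * (δ - 1) + ι * δ) * cosh t ^ (δ - 2) * sinh_sq t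

theorem bernstein_sato_BC1 (ι b : ℝ) (hι : 0 < ι) (hb : 0 < b) (δ : ℝ)
    (t : ℝ) (ht : t ≠ 0) :
    cherednikBC1 ι b (cherednikBC1 ι b (fun s => Real.cosh s ^ δ)) t -
        (δ + (ι + b)) ^ 2 * Real.cosh t ^ δ
      = δ * (1 - δ - ι) * Real.cosh t ^ (δ - 2) :=
  bernstein_sato_BC1_general ι b δ t ht
end

section
/- Rank-one second-step lemma: with D the BC₁ Cherednik operator with parameters ι, b > 0 and ρ = ι + b, for every real δ and t ≠ 0, (D − (δ + ρ)) applied to g(t) = (cosh t)^{δ−1}·e^t equals (1 − δ − ι)·(1 − tanh t)·(cosh t)^{δ−1}·e^t. -/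
/-!
Write `g s = (cosh s)^(δ-1) · eˢ`. Its logarithmic derivative is `(δ - 1) tanh t + 1`, and its odd
part `g t - g (-t) = 2 (cosh t)^(δ-1) sinh t` cancels the poles of both reflection coefficients:
the `b`-term becomes `2b · g t` and the `ι`-term becomes `ι (1 + tanh t) · g t`, using
`eᵗ = cosh t + sinh t`. Collecting, the bracket is `(δ + ι - 1)(tanh t - 1)`.
-/

open Real

lemma exp_div_cosh (t : ℝ) : exp t / cosh t = 1 + tanh t := by
  rw [← cosh_add_sinh, add_div, div_self (cosh_pos t).ne', tanh_eq_sinh_div_cosh]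

lemma cherednikBC1_apply_of_sub_neg_eq {ι b c f' t : ℝ} {f : ℝ → ℝ} (hf : HasDerivAt f f' t)
    (hodd : f t - f (-t) = 2 * c * sinh t) (ht : t ≠ 0) :
    cherednikBC1 ι b f t = f' + (ι * (1 + tanh t) + 2 * b) * c * exp t - (ι + b) * f t := by
  have hsinh : sinh t ≠ 0 := sinh_ne_zero.mpr ht
  have hcosh : cosh t ≠ 0 := (cosh_pos t).ne'
  have hexp2 : exp (2 * t) - exp (-(2 * t)) = 4 * sinh t * cosh t := by
    rw [show exp (2 * t) - exp (-(2 * t)) = 2 * sinh (2 * t) by rw [sinh_eq]; ring, sinh_two_mul]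
    ring
  have hexp1 : exp t - exp (-t) = 2 * sinh t := by rw [sinh_eq]; ring
  rw [cherednikBC1, hf.deriv, hodd, hexp2, hexp1, ← exp_div_cosh, two_mul t, exp_add]
  field_simp
  ring

lemma hasDerivAt_cosh_rpow_mul_exp (a t : ℝ) :
    HasDerivAt (fun s => cosh s ^ a * exp s) ((a * tanh t + 1) * (cosh t ^ a * exp t)) t := by
  refine (((hasDerivAt_cosh t).rpow_const (p := a) (Or.inl (cosh_pos t).ne')).mul
    (hasDerivAt_exp t)).congr_deriv ?_
  rw [rpow_sub (cosh_pos t), rpow_one, tanh_eq_sinh_div_cosh]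
  field_simp

theorem second_step_BC1_general (ι b : ℝ) (δ : ℝ)
    (t : ℝ) (ht : t ≠ 0) :
    cherednikBC1 ι b (fun s => Real.cosh s ^ (δ - 1) * Real.exp s) t -
        (δ + (ι + b)) * (Real.cosh t ^ (δ - 1) * Real.exp t)
      = (1 - δ - ι) * (1 - Real.tanh t) * (Real.cosh t ^ (δ - 1) * Real.exp t) := by
  have hodd : cosh t ^ (δ - 1) * exp t - cosh (-t) ^ (δ - 1) * exp (-t)
      = 2 * cosh t ^ (δ - 1) * sinh t := by
    rw [cosh_neg, sinh_eq]; ring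
  rw [cherednikBC1_apply_of_sub_neg_eq (hasDerivAt_cosh_rpow_mul_exp (δ - 1) t) hodd ht]
  ring

theorem second_step_BC1 (ι b : ℝ) (hι : 0 < ι) (hb : 0 < b) (δ : ℝ)
    (t : ℝ) (ht : t ≠ 0) :
    cherednikBC1 ι b (fun s => Real.cosh s ^ (δ - 1) * Real.exp s) t -
        (δ + (ι + b)) * (Real.cosh t ^ (δ - 1) * Real.exp t)
      = (1 - δ - ι) * (1 - Real.tanh t) * (Real.cosh t ^ (δ - 1) * Real.exp t) :=
  second_step_BC1_general ι b δ t ht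
end

section
/- Gamma quotient infinite product formula: for complex numbers A, B, C with A, B, A+C, B−C avoiding the nonpositive integers, Γ(A)Γ(B)/(Γ(A+C)Γ(B−C)) = ∏_{s=0}^∞ (1 + C/(A+s))·(1 − C/(B+s)). -/
open Filter Finset Asymptotics Topology

/-!
Γ is the limit of Euler's sequence `GammaSeq z n = n ^ z * n! / ∏_{j ≤ n} (z + j)`. Since
`A + B = (A + C) + (B - C)`, the powers of `n` and the factorials cancel in
`GammaSeq A n * GammaSeq B n / (GammaSeq (A + C) n * GammaSeq (B - C) n)`, which is therefore
exactly the `n`-th partial product. The product converges because its factors are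
`1 + C (B - A - C) / ((A + s) (B + s)) = 1 + O(1 / s²)`.
-/

namespace Complex

theorem GammaSeq_mul_GammaSeq_div_GammaSeq_mul_GammaSeq {a b c d : ℂ} (h : a + b = c + d)
    {n : ℕ} (hn : n ≠ 0) :
    GammaSeq a n * GammaSeq b n / (GammaSeq c n * GammaSeq d n)
      = ∏ j ∈ range (n + 1), (c + j) * (d + j) / ((a + j) * (b + j)) := by
  have hn' : (n : ℂ) ≠ 0 := Nat.cast_ne_zero.mpr hn
  have hmul (x y : ℂ) : GammaSeq x n * GammaSeq y n = (n : ℂ) ^ (x + y) * n.factorial ^ 2 /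
      ((∏ j ∈ range (n + 1), (x + j)) * ∏ j ∈ range (n + 1), (y + j)) := by
    rw [GammaSeq, GammaSeq, div_mul_div_comm, cpow_add _ _ hn']
    ring
  have hnum : (n : ℂ) ^ (c + d) * n.factorial ^ 2 ≠ 0 :=
    mul_ne_zero (cpow_ne_zero_iff.mpr (Or.inl hn'))
      (pow_ne_zero _ (Nat.cast_ne_zero.mpr n.factorial_ne_zero))
  rw [hmul, hmul, h, div_div_div_cancel_left' _ _ hnum, prod_div_distrib, prod_mul_distrib,
    prod_mul_distrib]

theorem summable_inv_add_natCast_mul_add_natCast (a b : ℂ) :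
    Summable fun s : ℕ => ((a + s) * (b + s))⁻¹ := by
  have hnorm : Tendsto (norm ∘ fun s : ℕ => (s : ℂ)) atTop atTop := by
    simpa [Function.comp_def] using tendsto_natCast_atTop_atTop
  have hequiv (z : ℂ) : (fun s : ℕ => z + s) ~[atTop] fun s => (s : ℂ) :=
    IsEquivalent.refl.const_add_of_norm_tendsto_atTop hnorm
  refine summable_of_isBigO_nat (Real.summable_nat_pow_inv.mpr one_lt_two) ?_
  refine ((hequiv a).mul (hequiv b)).inv.isBigO.trans ?_
  refine IsBigO.of_bound 1 (Eventually.of_forall fun s => ?_)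
  simp [sq]

theorem multipliable_add_natCast_mul_add_natCast_div {a b c d : ℂ} (h : a + b = c + d) :
    Multipliable fun s : ℕ => (c + s) * (d + s) / ((a + s) * (b + s)) := by
  by_cases! hpole : ∃ s : ℕ, (a + s) * (b + s) = 0
  · obtain ⟨s, hs⟩ := hpole
    exact multipliable_of_exists_eq_zero ⟨s, by simp [hs]⟩
  · have hsummable := (summable_inv_add_natCast_mul_add_natCast a b).mul_left (c * d - a * b)
    refine (Complex.multipliable_one_add_of_summable hsummable).congr fun s => ?_
    rw [← div_eq_mul_inv, one_add_div (hpole s)]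
    congr 1
    linear_combination (s : ℂ) * h

theorem hasProd_add_natCast_mul_add_natCast_div {a b c d : ℂ} (h : a + b = c + d)
    (hc : ∀ m : ℕ, c ≠ -m) (hd : ∀ m : ℕ, d ≠ -m) :
    HasProd (fun s : ℕ => (c + s) * (d + s) / ((a + s) * (b + s)))
      (Gamma a * Gamma b / (Gamma c * Gamma d)) := by
  have hlim := ((GammaSeq_tendsto_Gamma a).mul (GammaSeq_tendsto_Gamma b)).div
    ((GammaSeq_tendsto_Gamma c).mul (GammaSeq_tendsto_Gamma d))
    (mul_ne_zero (Gamma_ne_zero hc) (Gamma_ne_zero hd))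
  have hpartial : Tendsto (fun n => ∏ s ∈ range (n + 1), (c + s) * (d + s) / ((a + s) * (b + s)))
      atTop (𝓝 (Gamma a * Gamma b / (Gamma c * Gamma d))) :=
    hlim.congr' <| (eventually_ne_atTop 0).mono fun n hn =>
      GammaSeq_mul_GammaSeq_div_GammaSeq_mul_GammaSeq h hn
  have hprod := (multipliable_add_natCast_mul_add_natCast_div h).hasProd
  rwa [tendsto_nhds_unique (hprod.tendsto_prod_nat.comp (tendsto_add_atTop_nat 1)) hpartial]
    at hprod

end Complex

theorem gamma_quotient_infinite_product (A B C : ℂ)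
    (hA : ∀ n : ℕ, A ≠ -n) (hB : ∀ n : ℕ, B ≠ -n)
    (hAC : ∀ n : ℕ, A + C ≠ -n) (hBC : ∀ n : ℕ, B - C ≠ -n) :
    Complex.Gamma A * Complex.Gamma B / (Complex.Gamma (A + C) * Complex.Gamma (B - C))
      = ∏' s : ℕ, (1 + C / (A + s)) * (1 - C / (B + s)) := by
  have hfactor (s : ℕ) : (1 + C / (A + s)) * (1 - C / (B + s))
      = (A + C + s) * (B - C + s) / ((A + s) * (B + s)) := by
    have hAs : A + s ≠ 0 := fun h => hA s (eq_neg_of_add_eq_zero_left h)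
    have hBs : B + s ≠ 0 := fun h => hB s (eq_neg_of_add_eq_zero_left h)
    field_simp
    ring
  simp_rw [hfactor]
  exact (Complex.hasProd_add_natCast_mul_add_natCast_div (by ring) hAC hBC).tprod_eq.symm
end

section
/- Rank-one normalization integral: for real ι, b > 0 and ν > ι + b, the integral over ℝ of (cosh t)^{−2ν}·|2 sinh t|^{2b}·|2 sinh 2t|^{ι} dt equals 2^{2ι+2b}·B((ι + 1 + 2b)/2, ν − ι − b), where B is the Beta function. -/
/-!
The integrand is even, so the integral is twice the one over `(0, ∞)`. There the substitution
`z = tanh² t`, with `dz = 2 tanh t / cosh² t dt`, `sinh² t = z / (1 - z)` and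
`cosh² t = 1 / (1 - z)`, turns it into `2 ^ (2ι + 2b - 1)` times the Euler integral
`∫₀¹ z ^ (x - 1) (1 - z) ^ (y - 1) dz = B(x, y)` with `x = (ι + 1 + 2b) / 2`, `y = ν - ι - b`.
-/

open MeasureTheory

open Real Set

theorem Real.hasDerivAt_tanh (x : ℝ) : HasDerivAt tanh (1 / cosh x ^ 2) x := by
  have h := (hasDerivAt_sinh x).div (hasDerivAt_cosh x) (cosh_pos x).ne'
  rw [show sinh / cosh = tanh from funext fun y => (tanh_eq_sinh_div_cosh y).symm] at h
  refine h.congr_deriv ?_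
  rw [← cosh_sq_sub_sinh_sq x]
  ring

theorem Real.tanh_pos {x : ℝ} (hx : 0 < x) : 0 < tanh x := by
  rw [tanh_eq_sinh_div_cosh]
  exact div_pos (sinh_pos_iff.2 hx) (cosh_pos x)

theorem injOn_tanh_sq_Ioi : InjOn (fun t => tanh t ^ 2) (Ioi 0) := fun _ hs _ ht hst =>
  tanh_injective <| (pow_left_inj₀ (tanh_pos hs).le (tanh_pos ht).le two_ne_zero).1 hst

theorem image_tanh_sq_Ioi : (fun t => tanh t ^ 2) '' Ioi 0 = Ioo 0 1 := by
  ext z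
  constructor
  · rintro ⟨t, ht, rfl⟩
    have h0 := tanh_pos ht
    have h1 := tanh_lt_one t
    exact ⟨by positivity, by nlinarith⟩
  · rintro ⟨hz0, hz1⟩
    have hsqrt : √z ∈ Ioo 0 1 := ⟨sqrt_pos.2 hz0, (sqrt_lt' one_pos).2 (by simpa using hz1)⟩
    refine ⟨artanh √z, artanh_pos hsqrt, ?_⟩
    dsimp only
    rw [tanh_artanh ⟨by linarith [hsqrt.1], hsqrt.2⟩, sq_sqrt hz0.le]

theorem integral_Ioo_zero_one_eq_integral_Ioi_comp_tanh_sq {E : Type*} [NormedAddCommGroup E]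
    [NormedSpace ℝ E] (f : ℝ → E) :
    ∫ z in Ioo 0 1, f z = ∫ t in Ioi 0, (2 * tanh t / cosh t ^ 2) • f (tanh t ^ 2) := by
  have hderiv : ∀ t ∈ Ioi (0 : ℝ),
      HasDerivWithinAt (fun t => tanh t ^ 2) (2 * tanh t / cosh t ^ 2) (Ioi 0) t := fun t _ =>
    (((hasDerivAt_tanh t).pow 2).congr_deriv (by ring)).hasDerivWithinAt
  rw [← image_tanh_sq_Ioi,
    integral_image_eq_integral_abs_deriv_smul measurableSet_Ioi hderiv injOn_tanh_sq_Ioi]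
  refine setIntegral_congr_fun measurableSet_Ioi fun t ht => ?_
  rw [abs_of_pos (by have := tanh_pos ht; positivity)]

theorem integral_Ioo_rpow_mul_one_sub_rpow {x y : ℝ} (hx : 0 < x) (hy : 0 < y) :
    ∫ z in Ioo 0 1, z ^ (x - 1) * (1 - z) ^ (y - 1) = ProbabilityTheory.beta x y := by
  have hofReal :
      Complex.betaIntegral x y = ↑(∫ z in (0)..1, z ^ (x - 1) * (1 - z) ^ (y - 1)) := by
    rw [Complex.betaIntegral, ← intervalIntegral.integral_ofReal]
    refine intervalIntegral.integral_congr fun z hz => ?_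
    rw [uIcc_of_le zero_le_one] at hz
    push_cast [Complex.ofReal_cpow hz.1, Complex.ofReal_cpow (sub_nonneg.2 hz.2)]
    rfl
  rw [ProbabilityTheory.beta_eq_betaIntegralReal x y hx hy, hofReal, Complex.ofReal_re,
    intervalIntegral.integral_of_le zero_le_one, integral_Ioc_eq_integral_Ioo]

theorem rank_one_integrand_eq_beta_integrand_comp_tanh_sq (ι b ν : ℝ) {t : ℝ} (ht : 0 < t) :
    cosh t ^ (-2 * ν) * |2 * sinh t| ^ (2 * b) * |2 * sinh (2 * t)| ^ ι
      = 2 ^ (2 * ι + 2 * b - 1) * ((2 * tanh t / cosh t ^ 2) *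
        ((tanh t ^ 2) ^ ((ι + 1 + 2 * b) / 2 - 1) * (1 - tanh t ^ 2) ^ (ν - ι - b - 1))) := by
  have hs : 0 < sinh t := sinh_pos_iff.2 ht
  have hc : 0 < cosh t := cosh_pos t
  have hsech : 1 - tanh t ^ 2 = (cosh t ^ 2)⁻¹ := by
    rw [tanh_eq_sinh_div_cosh]
    field_simp
    linarith [cosh_sq t]
  rw [hsech, tanh_eq_sinh_div_cosh, sinh_two_mul, abs_of_pos (by positivity),
    abs_of_pos (by positivity)]
  refine log_injOn_pos (mem_Ioi.2 (by positivity)) (mem_Ioi.2 (by positivity)) ?_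
  simp (disch := positivity) only [log_mul, log_rpow, log_div, log_pow, log_inv]
  ring

theorem rank_one_normalization_integral (ι b ν : ℝ) (hι : 0 < ι) (hb : 0 < b)
    (hν : ι + b < ν) :
    ∫ t : ℝ, Real.cosh t ^ (-2 * ν) * |2 * Real.sinh t| ^ (2 * b) *
        |2 * Real.sinh (2 * t)| ^ ι
      = 2 ^ (2 * ι + 2 * b) *
        (Real.Gamma ((ι + 1 + 2 * b) / 2) * Real.Gamma (ν - ι - b) /
          Real.Gamma ((ι + 1 + 2 * b) / 2 + (ν - ι - b))) := by
  set F : ℝ → ℝ := fun t => cosh t ^ (-2 * ν) * |2 * sinh t| ^ (2 * b) *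
    |2 * sinh (2 * t)| ^ ι with hF
  have heven (t : ℝ) : F |t| = F t := by
    simp only [hF, cosh_abs, abs_mul, abs_sinh, abs_abs, abs_two]
  calc ∫ t, F t = 2 * ∫ t in Ioi 0, F t := by simp only [← integral_comp_abs, heven]
    _ = 2 * (2 ^ (2 * ι + 2 * b - 1) * ∫ z in Ioo 0 1,
        z ^ ((ι + 1 + 2 * b) / 2 - 1) * (1 - z) ^ (ν - ι - b - 1)) := by
      congr 1
      rw [integral_Ioo_zero_one_eq_integral_Ioi_comp_tanh_sq, ← integral_const_mul]
      exact setIntegral_congr_fun measurableSet_Ioi fun t ht =>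
        rank_one_integrand_eq_beta_integrand_comp_tanh_sq ι b ν (mem_Ioi.1 ht)
    _ = _ := by
      rw [integral_Ioo_rpow_mul_one_sub_rpow (by linarith) (by linarith),
        ← mul_assoc, ← rpow_one_add' zero_le_two (by linarith)]
      norm_num [ProbabilityTheory.beta]
end

section
/- Rank-one spherical transform recursion solution: let ι, b > 0 and ρ = ι + b. If β(ν,λ) = ∏_{l=0}^∞ (1 + (ρ/2)/(ν+l−ρ/2))(1 − (ρ/2)/(ν+l−ρ/2))·(1 + (iλ/2)/(ν+l−ρ/2))^{−1}(1 − (iλ/2)/(ν+l−ρ/2))^{−1} for ν > ρ and λ ∈ ℝ, then β(ν, λ) = Γ(ν − ρ/2 + iλ/2)·Γ(ν − ρ/2 − iλ/2)/(Γ(ν)·Γ(ν − ρ)). -/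
open Complex Filter Finset Topology

private lemma re_pos_ne_zero {z : ℂ} (h : 0 < z.re) : z ≠ 0 := by
  intro e; rw [e] at h; simp at h

private lemma gamma_quotient_hasProd (A C lam : ℝ) (hC : 0 < C) (hAC : C < A) :
    HasProd (fun l : ℕ =>
      (1 + (C : ℂ) / ((A : ℂ) + l)) * (1 - (C : ℂ) / ((A : ℂ) + l)) *
        (1 + (Complex.I * lam / 2) / ((A : ℂ) + l))⁻¹ *
        (1 - (Complex.I * lam / 2) / ((A : ℂ) + l))⁻¹)
      (Complex.Gamma ((A : ℂ) + Complex.I * lam / 2) *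
          Complex.Gamma ((A : ℂ) - Complex.I * lam / 2) /
        (Complex.Gamma ((A : ℂ) + C) * Complex.Gamma ((A : ℂ) - C))) := by
  have hA : 0 < A := hC.trans hAC
  set D : ℂ := Complex.I * lam / 2 with hD
  set f : ℕ → ℂ := fun l =>
      (1 + (C : ℂ) / ((A : ℂ) + l)) * (1 - (C : ℂ) / ((A : ℂ) + l)) *
        (1 + D / ((A : ℂ) + l))⁻¹ * (1 - D / ((A : ℂ) + l))⁻¹ with hf
  -- basic facts
  have hDre : D.re = 0 := by simp [hD]
  have hxc : ∀ l : ℕ, ((A : ℂ) + l) = ((A + l : ℝ) : ℂ) := by intro l; push_cast; ring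
  have hxpos : ∀ l : ℕ, (0:ℝ) < A + l := by
    intro l; have : (0:ℝ) ≤ l := Nat.cast_nonneg l; linarith
  have hx0 : ∀ l : ℕ, ((A : ℂ) + l) ≠ 0 := fun l => by
    rw [hxc l]; exact_mod_cast (hxpos l).ne'
  have hpD : ∀ l : ℕ, ((A : ℂ) + D + l) ≠ 0 := fun l =>
    re_pos_ne_zero (by simp [Complex.add_re, hDre]; exact hxpos l)
  have hmD : ∀ l : ℕ, ((A : ℂ) - D + l) ≠ 0 := fun l =>
    re_pos_ne_zero (by simp [Complex.add_re, Complex.sub_re, hDre]; exact hxpos l)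
  have hpC : ∀ l : ℕ, ((A : ℂ) + C + l) ≠ 0 := fun l => by
    have : ((A : ℂ) + C + l) = ((A + C + l : ℝ) : ℂ) := by push_cast; ring
    rw [this]
    exact_mod_cast (by have := (Nat.cast_nonneg (α := ℝ) l); positivity : (0:ℝ) < A + C + l).ne'
  have hmC : ∀ l : ℕ, ((A : ℂ) - C + l) ≠ 0 := fun l => by
    have : ((A : ℂ) - C + l) = ((A - C + l : ℝ) : ℂ) := by push_cast; ring
    rw [this]
    have hl : (0:ℝ) ≤ l := Nat.cast_nonneg l
    exact_mod_cast (by linarith : (0:ℝ) < A - C + l).ne'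
  have h1p : ∀ l : ℕ, (1 + D / ((A : ℂ) + l)) ≠ 0 := by
    intro l
    apply re_pos_ne_zero
    rw [hxc l]
    simp [Complex.add_re, Complex.div_re, hDre]
  have h1m : ∀ l : ℕ, (1 - D / ((A : ℂ) + l)) ≠ 0 := by
    intro l
    apply re_pos_ne_zero
    rw [hxc l]
    simp [Complex.sub_re, Complex.div_re, hDre]
  have hf_eq : ∀ l : ℕ, f l =
      (((A : ℂ) + C + l) * ((A : ℂ) - C + l)) /
        (((A : ℂ) + D + l) * ((A : ℂ) - D + l)) := by
    intro l
    have u0 := hx0 l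
    have e1 : (1 : ℂ) + (C:ℂ) / ((A:ℂ)+l) = (((A:ℂ)+l) + C) / ((A:ℂ)+l) := by
      rw [add_div, div_self u0]
    have e2 : (1 : ℂ) - (C:ℂ) / ((A:ℂ)+l) = (((A:ℂ)+l) - C) / ((A:ℂ)+l) := by
      rw [sub_div, div_self u0]
    have e3 : ((1 : ℂ) + D / ((A:ℂ)+l))⁻¹ = ((A:ℂ)+l) / (((A:ℂ)+l) + D) := by
      rw [show (1 : ℂ) + D / ((A:ℂ)+l) = (((A:ℂ)+l) + D) / ((A:ℂ)+l) by
        rw [add_div, div_self u0], inv_div]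
    have e4 : ((1 : ℂ) - D / ((A:ℂ)+l))⁻¹ = ((A:ℂ)+l) / (((A:ℂ)+l) - D) := by
      rw [show (1 : ℂ) - D / ((A:ℂ)+l) = (((A:ℂ)+l) - D) / ((A:ℂ)+l) by
        rw [sub_div, div_self u0], inv_div]
    have hxD : ((A:ℂ)+l) + D ≠ 0 := by
      intro h; apply hpD l; rw [← h]; ring
    have hxD' : ((A:ℂ)+l) - D ≠ 0 := by
      intro h; apply hmD l; rw [← h]; ring
    rw [hf]
    simp only []
    rw [e1, e2, e3, e4, div_mul_div_comm, div_mul_div_comm, div_mul_div_comm]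
    rw [div_eq_div_iff (by exact mul_ne_zero (mul_ne_zero (mul_ne_zero u0 u0) hxD) hxD')
      (mul_ne_zero (hpD l) (hmD l))]
    ring
  -- f l is a positive real
  have hf_real : ∀ l : ℕ, f l =
      ((((A + l) ^ 2 - C ^ 2) / ((A + l) ^ 2 + lam ^ 2 / 4) : ℝ) : ℂ) := by
    intro l
    rw [hf_eq l]
    have hden : ((A + l) ^ 2 + lam ^ 2 / 4 : ℝ) ≠ 0 := by positivity
    rw [Complex.ofReal_div]
    rw [div_eq_div_iff (mul_ne_zero (hpD l) (hmD l)) (Complex.ofReal_ne_zero.mpr hden)]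
    rw [hD]
    push_cast
    linear_combination ((((A:ℂ) + (l:ℂ)) ^ 2 - (C:ℂ) ^ 2) * (lam:ℂ) ^ 2 / 4) * Complex.I_sq
  have hf_pos : ∀ l : ℕ, (0:ℝ) < ((A + l) ^ 2 - C ^ 2) / ((A + l) ^ 2 + lam ^ 2 / 4) := by
    intro l
    apply div_pos _ (by positivity)
    have h1 : C < A + l := lt_of_lt_of_le hAC (by simp)
    nlinarith [hC]
  have hf_ne : ∀ l : ℕ, f l ≠ 0 := fun l => by
    rw [hf_real l]; exact_mod_cast (hf_pos l).ne'
  -- Summability of ‖f l - 1‖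
  have hsum_r : Summable (fun l : ℕ => ‖f l - 1‖) := by
    set c : ℝ := min A 1 with hc
    have hc0 : 0 < c := lt_min hA one_pos
    have hb : Summable (fun l : ℕ => (C ^ 2 + lam ^ 2 / 4) / c ^ 2 * (((l:ℝ) + 1) ^ 2)⁻¹) := by
      apply Summable.mul_left
      have : Summable (fun l : ℕ => ((l:ℝ) ^ 2)⁻¹) := by
        simpa using Real.summable_one_div_nat_pow.mpr (by norm_num : 1 < 2)
      have := (summable_nat_add_iff 1).mpr this
      simpa using this
    apply Summable.of_nonneg_of_le (fun l => norm_nonneg _) _ hb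
    intro l
    rw [hf_real l]
    have hden : (0:ℝ) < (A + l) ^ 2 + lam ^ 2 / 4 := by positivity
    have ereal : (((A + l) ^ 2 - C ^ 2) / ((A + l) ^ 2 + lam ^ 2 / 4)) - 1
        = -((C ^ 2 + lam ^ 2 / 4) / ((A + l) ^ 2 + lam ^ 2 / 4)) := by
      field_simp
      ring
    have e : ((((A + l) ^ 2 - C ^ 2) / ((A + l) ^ 2 + lam ^ 2 / 4) : ℝ) : ℂ) - 1
        = -(((C ^ 2 + lam ^ 2 / 4) / ((A + l) ^ 2 + lam ^ 2 / 4) : ℝ) : ℂ) := by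
      rw [show -(((C ^ 2 + lam ^ 2 / 4) / ((A + l) ^ 2 + lam ^ 2 / 4) : ℝ) : ℂ)
          = ((-((C ^ 2 + lam ^ 2 / 4) / ((A + l) ^ 2 + lam ^ 2 / 4)) : ℝ) : ℂ) by push_cast; ring]
      rw [← ereal]; push_cast; ring
    rw [e, norm_neg, Complex.norm_real, Real.norm_eq_abs]
    rw [_root_.abs_of_nonneg (show (0:ℝ) ≤ (C ^ 2 + lam ^ 2 / 4) / ((A + (l:ℝ)) ^ 2 + lam ^ 2 / 4)
      by positivity)]
    have hcl : c * ((l:ℝ) + 1) ≤ A + l := by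
      rcases le_total A 1 with h | h
      · have hce : c = A := min_eq_left h
        rw [hce]
        have : (0:ℝ) ≤ l := Nat.cast_nonneg l
        nlinarith
      · have hcle : c ≤ 1 := min_le_right _ _
        have hcA : c ≤ A := min_le_left _ _
        have : (0:ℝ) ≤ l := Nat.cast_nonneg l
        nlinarith
    have h2 : (c * ((l:ℝ) + 1)) ^ 2 ≤ (A + l) ^ 2 + lam ^ 2 / 4 := by
      have h3 : (0:ℝ) < c * ((l:ℝ) + 1) := by positivity
      nlinarith [sq_nonneg lam]
    calc (C ^ 2 + lam ^ 2 / 4) / ((A + l) ^ 2 + lam ^ 2 / 4)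
        ≤ (C ^ 2 + lam ^ 2 / 4) / (c * ((l:ℝ) + 1)) ^ 2 := by
          apply div_le_div_of_nonneg_left (by positivity) (by positivity) h2
      _ = (C ^ 2 + lam ^ 2 / 4) / c ^ 2 * (((l:ℝ) + 1) ^ 2)⁻¹ := by
          rw [mul_pow, ← div_div, div_eq_mul_inv]
  -- Multipliable f
  have hmult : Multipliable f := by
    have hlog : Summable (fun l : ℕ => Complex.log (f l)) := by
      have hto : Tendsto (fun l : ℕ => ‖f l - 1‖) atTop (𝓝 0) := hsum_r.tendsto_atTop_zero
      have hev : ∀ᶠ l in atTop, ‖Complex.log (f l)‖ ≤ 3/2 * ‖f l - 1‖ := by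
        filter_upwards [hto.eventually_le_const (by norm_num : (0:ℝ) < 1/2)] with l hl
        have h := Complex.norm_log_one_add_half_le_self (z := f l - 1) hl
        have e : 1 + (f l - 1) = f l := by ring
        rwa [e] at h
      exact Summable.of_norm_bounded_eventually (hsum_r.mul_left (3/2))
        (by rw [Nat.cofinite_eq_atTop]; exact hev)
    have hp : HasProd f (Complex.exp (∑' l, Complex.log (f l))) := by
      have h0 := hlog.hasSum.cexp
      have hfe : (Complex.exp ∘ fun l => Complex.log (f l)) = f :=
        funext fun l => Complex.exp_log (hf_ne l)
      rwa [hfe] at h0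
    exact ⟨_, hp⟩
  -- partial products via GammaSeq
  have hGQ : ∀ (z : ℂ), (∀ l : ℕ, z + l ≠ 0) → ∀ n : ℕ,
      (∏ j ∈ Finset.range (n + 1), (z + j)) ≠ 0 := by
    intro z hz n
    exact Finset.prod_ne_zero_iff.mpr fun j _ => hz j
  have hPn : ∀ n : ℕ, 1 ≤ n → ∏ l ∈ Finset.range (n + 1), f l =
      Complex.GammaSeq ((A : ℂ) + D) n * Complex.GammaSeq ((A : ℂ) - D) n /
        (Complex.GammaSeq ((A : ℂ) + C) n * Complex.GammaSeq ((A : ℂ) - C) n) := by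
    intro n hn
    have hn0 : (n : ℂ) ≠ 0 := Nat.cast_ne_zero.mpr (by omega)
    have hfa : ((Nat.factorial n : ℕ) : ℂ) ≠ 0 := Nat.cast_ne_zero.mpr (Nat.factorial_ne_zero n)
    have hnp : ∀ z : ℂ, (n:ℂ) ^ z ≠ 0 := fun z => by
      rw [Complex.cpow_def_of_ne_zero hn0]
      exact Complex.exp_ne_zero _
    have hcp : (n:ℂ) ^ ((A : ℂ) + D) * (n:ℂ) ^ ((A : ℂ) - D)
        = (n:ℂ) ^ ((A : ℂ) + C) * (n:ℂ) ^ ((A : ℂ) - C) := by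
      rw [← Complex.cpow_add _ _ hn0, ← Complex.cpow_add _ _ hn0]
      congr 1; ring
    have hQpC := hGQ _ hpC n
    have hQmC := hGQ _ hmC n
    have hQpD := hGQ _ hpD n
    have hQmD := hGQ _ hmD n
    have hL : ∏ l ∈ Finset.range (n + 1), f l =
        ((∏ j ∈ Finset.range (n+1), ((A : ℂ) + C + j)) *
          (∏ j ∈ Finset.range (n+1), ((A : ℂ) - C + j))) /
        ((∏ j ∈ Finset.range (n+1), ((A : ℂ) + D + j)) *
          (∏ j ∈ Finset.range (n+1), ((A : ℂ) - D + j))) := by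
      rw [Finset.prod_congr rfl fun l _ => hf_eq l]
      rw [Finset.prod_div_distrib, Finset.prod_mul_distrib, Finset.prod_mul_distrib]
    rw [hL]
    simp only [Complex.GammaSeq]
    rw [div_mul_div_comm, div_mul_div_comm]
    have hT : (n:ℂ) ^ ((A : ℂ) + D) * ((Nat.factorial n : ℕ) : ℂ) * ((n:ℂ) ^ ((A : ℂ) - D) * ((Nat.factorial n : ℕ) : ℂ))
        = (n:ℂ) ^ ((A : ℂ) + C) * ((Nat.factorial n : ℕ) : ℂ) * ((n:ℂ) ^ ((A : ℂ) - C) * ((Nat.factorial n : ℕ) : ℂ)) := by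
      linear_combination ((Nat.factorial n : ℕ) : ℂ) * ((Nat.factorial n : ℕ) : ℂ) * hcp
    rw [hT, div_div_div_eq]
    rw [div_eq_div_iff (mul_ne_zero hQpD hQmD)
      (mul_ne_zero (mul_ne_zero hQpD hQmD)
        (mul_ne_zero (mul_ne_zero (hnp _) hfa) (mul_ne_zero (hnp _) hfa)))]
    ring
  -- the limit
  have hGpC : Complex.Gamma ((A : ℂ) + C) ≠ 0 :=
    Complex.Gamma_ne_zero_of_re_pos (by simp; positivity)
  have hGmC : Complex.Gamma ((A : ℂ) - C) ≠ 0 :=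
    Complex.Gamma_ne_zero_of_re_pos (by simp; linarith)
  have hlim : Tendsto (fun n : ℕ =>
      Complex.GammaSeq ((A : ℂ) + D) n * Complex.GammaSeq ((A : ℂ) - D) n /
        (Complex.GammaSeq ((A : ℂ) + C) n * Complex.GammaSeq ((A : ℂ) - C) n)) atTop
      (𝓝 (Complex.Gamma ((A : ℂ) + D) * Complex.Gamma ((A : ℂ) - D) /
        (Complex.Gamma ((A : ℂ) + C) * Complex.Gamma ((A : ℂ) - C)))) :=
    (((Complex.GammaSeq_tendsto_Gamma _).mul (Complex.GammaSeq_tendsto_Gamma _)).div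
      ((Complex.GammaSeq_tendsto_Gamma _).mul (Complex.GammaSeq_tendsto_Gamma _))
      (mul_ne_zero hGpC hGmC))
  have h2 : Tendsto (fun n : ℕ => ∏ l ∈ Finset.range (n + 1), f l) atTop
      (𝓝 (Complex.Gamma ((A : ℂ) + D) * Complex.Gamma ((A : ℂ) - D) /
        (Complex.Gamma ((A : ℂ) + C) * Complex.Gamma ((A : ℂ) - C)))) := by
    apply hlim.congr'
    filter_upwards [eventually_ge_atTop 1] with n hn
    exact (hPn n hn).symm
  have h3 : Tendsto (fun n : ℕ => ∏ l ∈ Finset.range n, f l) atTop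
      (𝓝 (Complex.Gamma ((A : ℂ) + D) * Complex.Gamma ((A : ℂ) - D) /
        (Complex.Gamma ((A : ℂ) + C) * Complex.Gamma ((A : ℂ) - C)))) :=
    (tendsto_add_atTop_iff_nat 1).mp h2
  exact (hmult.hasProd_iff_tendsto_nat).mpr h3

theorem rank_one_spherical_transform (ι b : ℝ) (hι : 0 < ι) (hb : 0 < b)
    (ρ : ℝ) (hρ : ρ = ι + b) (β : ℝ → ℝ → ℂ)
    (hβ : ∀ ν : ℝ, ρ < ν → ∀ lam : ℝ,
      β ν lam = ∏' l : ℕ,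
        (1 + ((ρ : ℂ) / 2) / ((ν : ℂ) + l - (ρ : ℂ) / 2)) *
          (1 - ((ρ : ℂ) / 2) / ((ν : ℂ) + l - (ρ : ℂ) / 2)) *
          (1 + (Complex.I * lam / 2) / ((ν : ℂ) + l - (ρ : ℂ) / 2))⁻¹ *
          (1 - (Complex.I * lam / 2) / ((ν : ℂ) + l - (ρ : ℂ) / 2))⁻¹) :
    ∀ ν : ℝ, ρ < ν → ∀ lam : ℝ,
      β ν lam = Complex.Gamma ((ν : ℂ) - ρ / 2 + Complex.I * lam / 2) *
          Complex.Gamma ((ν : ℂ) - ρ / 2 - Complex.I * lam / 2) /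
          (Complex.Gamma (ν : ℂ) * Complex.Gamma ((ν : ℂ) - ρ)) := by
  intro ν hν lam
  have hρ0 : 0 < ρ := by rw [hρ]; positivity
  have key := gamma_quotient_hasProd (ν - ρ / 2) (ρ / 2) lam (by positivity)
    (by linarith)
  rw [hβ ν hν lam]
  have h1 : ∀ l : ℕ, (1 + ((ρ : ℂ) / 2) / ((ν : ℂ) + l - (ρ : ℂ) / 2)) *
          (1 - ((ρ : ℂ) / 2) / ((ν : ℂ) + l - (ρ : ℂ) / 2)) *
          (1 + (Complex.I * lam / 2) / ((ν : ℂ) + l - (ρ : ℂ) / 2))⁻¹ *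
          (1 - (Complex.I * lam / 2) / ((ν : ℂ) + l - (ρ : ℂ) / 2))⁻¹
      = (1 + ((ρ/2 : ℝ) : ℂ) / (((ν - ρ/2 : ℝ) : ℂ) + l)) *
          (1 - ((ρ/2 : ℝ) : ℂ) / (((ν - ρ/2 : ℝ) : ℂ) + l)) *
        (1 + (Complex.I * lam / 2) / (((ν - ρ/2 : ℝ) : ℂ) + l))⁻¹ *
        (1 - (Complex.I * lam / 2) / (((ν - ρ/2 : ℝ) : ℂ) + l))⁻¹ := by
    intro l; push_cast; ring_nf
  rw [tprod_congr h1]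
  rw [key.tprod_eq]
  have e1 : ((ν - ρ/2 : ℝ) : ℂ) + Complex.I * lam / 2 = (ν : ℂ) - ρ / 2 + Complex.I * lam / 2 := by
    push_cast; ring
  have e2 : ((ν - ρ/2 : ℝ) : ℂ) - Complex.I * lam / 2 = (ν : ℂ) - ρ / 2 - Complex.I * lam / 2 := by
    push_cast; ring
  have e3 : ((ν - ρ/2 : ℝ) : ℂ) + ((ρ/2 : ℝ) : ℂ) = (ν : ℂ) := by push_cast; ring
  have e4 : ((ν - ρ/2 : ℝ) : ℂ) - ((ρ/2 : ℝ) : ℂ) = (ν : ℂ) - ρ := by push_cast; ring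
  rw [e1, e2, e3, e4]
end

section
/- Norm transfer under change of variables: let a, ι, b > 0, ν > ι + b + a(r−1), and let dμ(t) = ∏_{j}|2 sinh t_j|^{2b}|2 sinh 2t_j|^{ι}·∏_{i<j}|2 sinh(t_i − t_j)|^a|2 sinh(t_i + t_j)|^a dt on ℝ^r. For any continuous symmetric function P on [−1,1]^r, ∫_{ℝ^r} (∏_j (cosh t_j)^{−2ν}·P(tanh t₁, …, tanh t_r))² dμ(t) = 2^{(2ι+2b+a(r−1))r} ∫_{[−1,1]^r} P(x)²·∏_{i<j}|x_i² − x_j²|^a·∏_j |x_j|^{2b+ι}·∏_j (1−x_j²)^{2ν − (1+ι+b+a(r−1))} dx. -/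
/-!
Substitute `x_j = tanh t_j`, so that `dx_j = (1 - x_j²) dt_j = cosh⁻² t_j dt_j`. Writing
`sinh = tanh · cosh`, one gets `|2 sinh t| = 2 cosh t |x|`, `|2 sinh 2t| = 2 (2 cosh² t) |x|` and
`|2 sinh (u - v)| |2 sinh (u + v)| = (2 cosh² u) (2 cosh² v) |tanh² u - tanh² v|`. Since every
coordinate occurs in `r - 1` of the pairs `i < j`, the integrand on `ℝ^r` becomes the integrand on
the cube times `∏_j 2^(2ι + 2b + a(r-1)) cosh^(2ι + 2b + 2a(r-1) - 4ν) t_j`, and this power of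
`cosh t_j` is exactly `(1 - x_j²)^(2ν - (1 + ι + b + a(r-1)))` times the Jacobian `1 - x_j²`.
-/

open MeasureTheory Finset Real

theorem integral_univ_pi_range_eq_integral_abs_prod_deriv_smul {ι E : Type*} [Fintype ι]
    [NormedAddCommGroup E] [NormedSpace ℝ E] {f f' : ℝ → ℝ}
    (hf : ∀ x, HasDerivAt f (f' x) x) (hinj : Function.Injective f) (g : (ι → ℝ) → E) :
    ∫ y in Set.univ.pi fun _ : ι => Set.range f, g y
      = ∫ x : ι → ℝ, |∏ i, f' (x i)| • g fun i => f (x i) := by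
  have hrange : Set.univ.pi (fun _ : ι => Set.range f)
      = (fun (x : ι → ℝ) i => f (x i)) '' Set.univ := by
    rw [Set.image_univ, ← Set.range_piMap]; rfl
  have hderiv : ∀ x : ι → ℝ, HasFDerivAt (fun (x : ι → ℝ) i => f (x i))
      (ContinuousLinearMap.pi fun i =>
        (ContinuousLinearMap.toSpanSingleton ℝ (f' (x i))).comp (ContinuousLinearMap.proj i)) x :=
    fun x => hasFDerivAt_pi.2 fun i => (hf (x i)).hasFDerivAt.comp x (hasFDerivAt_apply i x)
  rw [hrange, integral_image_eq_integral_abs_det_fderiv_smul volume MeasurableSet.univ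
    (fun x _ => (hderiv x).hasFDerivWithinAt)
    (fun x _ y _ h => funext fun i => hinj (congrFun h i)),
    setIntegral_univ]
  simp only [ContinuousLinearMap.det_pi, ContinuousLinearMap.det_toSpanSingleton]

theorem prod_filter_lt_mul_eq_prod_pow {ι M : Type*} [Fintype ι] [LinearOrder ι] [CommMonoid M]
    (f : ι → M) :
    ∏ p ∈ univ.filter fun p : ι × ι => p.1 < p.2, f p.1 * f p.2
      = ∏ i, f i ^ (Fintype.card ι - 1) := by
  have hswap : ∏ p ∈ univ.filter (fun p : ι × ι => p.1 < p.2), f p.2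
      = ∏ p ∈ univ.filter (fun p : ι × ι => p.2 < p.1), f p.1 :=
    prod_nbij' Prod.swap Prod.swap (by simp) (by simp) (by simp) (by simp) (by simp)
  have hunion : univ.filter (fun p : ι × ι => p.1 < p.2) ∪ univ.filter (fun p => p.2 < p.1)
      = univ.filter fun p => p.1 ≠ p.2 := by
    rw [← filter_or]; simp_rw [ne_iff_lt_or_gt]
  rw [prod_mul_distrib, hswap, ← prod_union (disjoint_filter.2 fun p _ h => h.not_gt), hunion,
    prod_filter, Fintype.prod_prod_type]
  refine prod_congr rfl fun i _ => ?_
  dsimp only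
  rw [← prod_filter, prod_const, filter_ne, card_erase_of_mem (mem_univ i), card_univ]

namespace Real

theorem tanh_mul_cosh (x : ℝ) : tanh x * cosh x = sinh x := by
  rw [tanh_eq_sinh_div_cosh, div_mul_cancel₀ _ (cosh_pos x).ne']

theorem one_sub_tanh_sq (x : ℝ) : 1 - tanh x ^ 2 = (cosh x ^ 2)⁻¹ := by
  rw [tanh_eq_sinh_div_cosh, div_pow]
  field_simp [(cosh_pos x).ne']
  linear_combination cosh_sq_sub_sinh_sq x

theorem hasDerivAt_tanh_s18 (x : ℝ) : HasDerivAt tanh (1 - tanh x ^ 2) x := by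
  rw [one_sub_tanh_sq, funext tanh_eq_sinh_div_cosh]
  refine ((hasDerivAt_sinh x).div (hasDerivAt_cosh x) (cosh_pos x).ne').congr_deriv ?_
  rw [inv_eq_one_div, ← cosh_sq_sub_sinh_sq x]
  ring

theorem abs_two_mul_sinh (t : ℝ) : |2 * sinh t| = 2 * cosh t * |tanh t| := by
  rw [← tanh_mul_cosh, abs_mul, abs_mul, abs_two, abs_of_pos (cosh_pos t)]; ring

theorem abs_two_mul_sinh_two_mul (t : ℝ) :
    |2 * sinh (2 * t)| = 2 * (2 * cosh t ^ 2) * |tanh t| := by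
  rw [sinh_two_mul, ← tanh_mul_cosh, show 2 * (2 * (tanh t * cosh t) * cosh t)
    = 2 * (2 * cosh t ^ 2) * tanh t by ring, abs_mul, abs_of_pos (by positivity)]

theorem abs_two_mul_sinh_sub_mul_abs_two_mul_sinh_add (u v : ℝ) :
    |2 * sinh (u - v)| * |2 * sinh (u + v)|
      = 2 * cosh u ^ 2 * (2 * cosh v ^ 2) * |tanh u ^ 2 - tanh v ^ 2| := by
  rw [← abs_mul, sinh_sub, sinh_add, ← tanh_mul_cosh u, ← tanh_mul_cosh v,
    show 2 * (tanh u * cosh u * cosh v - cosh u * (tanh v * cosh v)) *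
      (2 * (tanh u * cosh u * cosh v + cosh u * (tanh v * cosh v)))
      = 2 * cosh u ^ 2 * (2 * cosh v ^ 2) * (tanh u ^ 2 - tanh v ^ 2) by ring,
    abs_mul, abs_of_pos (by positivity)]

theorem abs_two_mul_sinh_sub_rpow_mul_abs_two_mul_sinh_add_rpow (a u v : ℝ) :
    |2 * sinh (u - v)| ^ a * |2 * sinh (u + v)| ^ a
      = (2 * cosh u ^ 2) ^ a * (2 * cosh v ^ 2) ^ a * |tanh u ^ 2 - tanh v ^ 2| ^ a := by
  rw [← mul_rpow (abs_nonneg _) (abs_nonneg _), abs_two_mul_sinh_sub_mul_abs_two_mul_sinh_add,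
    mul_rpow (by positivity) (abs_nonneg _), mul_rpow (by positivity) (by positivity)]

end Real

theorem integral_univ_pi_Icc_eq_integral_tanh {ι E : Type*} [Fintype ι]
    [NormedAddCommGroup E] [NormedSpace ℝ E] (g : (ι → ℝ) → E) :
    ∫ y in Set.univ.pi fun _ : ι => Set.Icc (-1 : ℝ) 1, g y
      = ∫ t : ι → ℝ, (∏ i, (1 - tanh (t i) ^ 2)) • g fun i => tanh (t i) := by
  have hae : (Set.univ.pi fun _ : ι => Set.Ioo (-1 : ℝ) 1)
      =ᵐ[volume] Set.univ.pi fun _ => Set.Icc (-1) 1 := Measure.pi_Ioo_ae_eq_pi_Icc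
  have hrange : Set.range tanh = Set.Ioo (-1) 1 := by
    rw [← Set.image_univ]; exact tanh_bijOn.image_eq
  rw [← setIntegral_congr_set hae, ← hrange,
    integral_univ_pi_range_eq_integral_abs_prod_deriv_smul hasDerivAt_tanh_s18 tanh_injective]
  congr with t
  rw [abs_of_nonneg (prod_nonneg fun i _ => by rw [one_sub_tanh_sq]; positivity)]

theorem cosh_sinh_factor_eq_tanh_factor {b ι : ℝ} (hb : 0 ≤ b) (hι : 0 ≤ ι) (a ν : ℝ) (n : ℕ)
    (t : ℝ) :
    (cosh t ^ (-2 * ν)) ^ 2 * (|2 * sinh t| ^ (2 * b) * |2 * sinh (2 * t)| ^ ι) *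
        ((2 * cosh t ^ 2) ^ a) ^ n
      = 2 ^ (2 * ι + 2 * b + a * n) * (1 - tanh t ^ 2) * |tanh t| ^ (2 * b + ι) *
        (1 - tanh t ^ 2) ^ (2 * ν - (1 + ι + b + a * n)) := by
  have hcosh : (cosh t ^ (-2 * ν)) ^ 2 * ((2 * cosh t) ^ (2 * b) * (2 * (2 * cosh t ^ 2)) ^ ι) *
        ((2 * cosh t ^ 2) ^ a) ^ n
      = 2 ^ (2 * ι + 2 * b + a * n) * (cosh t ^ 2)⁻¹ *
        ((cosh t ^ 2)⁻¹) ^ (2 * ν - (1 + ι + b + a * n)) := by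
    refine log_injOn_pos (Set.mem_Ioi.2 (by positivity)) (Set.mem_Ioi.2 (by positivity)) ?_
    simp (disch := positivity) only [log_mul, log_rpow, log_pow, log_inv]
    ring
  rw [abs_two_mul_sinh, abs_two_mul_sinh_two_mul, one_sub_tanh_sq,
    mul_rpow (by positivity) (abs_nonneg _), mul_rpow (by positivity) (abs_nonneg _),
    rpow_add_of_nonneg (abs_nonneg _) (by positivity) hι]
  linear_combination (|tanh t| ^ (2 * b) * |tanh t| ^ ι) * hcosh

theorem cosh_sinh_integrand_eq_tanh_integrand {r : ℕ} {b ι : ℝ} (hb : 0 ≤ b) (hι : 0 ≤ ι)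
    (a ν Q : ℝ) (t : Fin r → ℝ) :
    ((∏ j, cosh (t j) ^ (-2 * ν)) * Q) ^ 2 *
        ((∏ j, |2 * sinh (t j)| ^ (2 * b) * |2 * sinh (2 * t j)| ^ ι) *
          ∏ p ∈ univ.filter fun p : Fin r × Fin r => p.1 < p.2,
            |2 * sinh (t p.1 - t p.2)| ^ a * |2 * sinh (t p.1 + t p.2)| ^ a)
      = 2 ^ ((2 * ι + 2 * b + a * ((r : ℝ) - 1)) * r) *
          ((∏ j, (1 - tanh (t j) ^ 2)) *
            (Q ^ 2 *
              ((∏ p ∈ univ.filter fun p : Fin r × Fin r => p.1 < p.2,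
                  |tanh (t p.1) ^ 2 - tanh (t p.2) ^ 2| ^ a) *
                (∏ j, |tanh (t j)| ^ (2 * b + ι)) *
                ∏ j, (1 - tanh (t j) ^ 2) ^ (2 * ν - (1 + ι + b + a * ((r : ℝ) - 1)))))) := by
  have hcoord : ∀ j : Fin r,
      (cosh (t j) ^ (-2 * ν)) ^ 2 * (|2 * sinh (t j)| ^ (2 * b) * |2 * sinh (2 * t j)| ^ ι) *
          ((2 * cosh (t j) ^ 2) ^ a) ^ (r - 1)
        = 2 ^ (2 * ι + 2 * b + a * ((r : ℝ) - 1)) * (1 - tanh (t j) ^ 2) *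
          |tanh (t j)| ^ (2 * b + ι) *
          (1 - tanh (t j) ^ 2) ^ (2 * ν - (1 + ι + b + a * ((r : ℝ) - 1))) := fun j => by
    simpa only [Nat.cast_pred j.pos] using cosh_sinh_factor_eq_tanh_factor hb hι a ν (r - 1) (t j)
  have hpairs : ∏ p ∈ univ.filter (fun p : Fin r × Fin r => p.1 < p.2),
        |2 * sinh (t p.1 - t p.2)| ^ a * |2 * sinh (t p.1 + t p.2)| ^ a
      = (∏ j, ((2 * cosh (t j) ^ 2) ^ a) ^ (r - 1)) *
        ∏ p ∈ univ.filter (fun p : Fin r × Fin r => p.1 < p.2),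
          |tanh (t p.1) ^ 2 - tanh (t p.2) ^ 2| ^ a := by
    simp only [abs_two_mul_sinh_sub_rpow_mul_abs_two_mul_sinh_add_rpow]
    rw [prod_mul_distrib, prod_filter_lt_mul_eq_prod_pow fun j => (2 * cosh (t j) ^ 2) ^ a,
      Fintype.card_fin]
  calc _ = Q ^ 2 * (∏ p ∈ univ.filter fun p : Fin r × Fin r => p.1 < p.2,
                  |tanh (t p.1) ^ 2 - tanh (t p.2) ^ 2| ^ a) *
          ∏ j, (cosh (t j) ^ (-2 * ν)) ^ 2 *
            (|2 * sinh (t j)| ^ (2 * b) * |2 * sinh (2 * t j)| ^ ι) *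
            ((2 * cosh (t j) ^ 2) ^ a) ^ (r - 1) := by
        rw [hpairs, mul_pow, ← prod_pow]
        simp only [prod_mul_distrib]
        ring
    _ = _ := by
        rw [prod_congr rfl fun j _ => hcoord j, rpow_mul_natCast (by norm_num)]
        simp only [prod_mul_distrib, prod_const, card_univ, Fintype.card_fin]
        ring

theorem norm_transfer_change_of_variables_general (r : ℕ) (a ι b ν : ℝ)
    (hι : 0 < ι) (hb : 0 < b) (P : (Fin r → ℝ) → ℝ) :
    ∫ t : Fin r → ℝ,
        ((∏ j, Real.cosh (t j) ^ (-2 * ν)) * P fun j => Real.tanh (t j)) ^ 2 *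
          ((∏ j, |2 * Real.sinh (t j)| ^ (2 * b) * |2 * Real.sinh (2 * t j)| ^ ι) *
            ∏ p ∈ Finset.univ.filter fun p : Fin r × Fin r => p.1 < p.2,
              |2 * Real.sinh (t p.1 - t p.2)| ^ a * |2 * Real.sinh (t p.1 + t p.2)| ^ a)
      = 2 ^ ((2 * ι + 2 * b + a * ((r : ℝ) - 1)) * r) *
          ∫ x in Set.univ.pi fun _ : Fin r => Set.Icc (-1 : ℝ) 1,
            P x ^ 2 *
              ((∏ p ∈ Finset.univ.filter fun p : Fin r × Fin r => p.1 < p.2,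
                  |x p.1 ^ 2 - x p.2 ^ 2| ^ a) *
                (∏ j, |x j| ^ (2 * b + ι)) *
                ∏ j, (1 - x j ^ 2) ^ (2 * ν - (1 + ι + b + a * ((r : ℝ) - 1)))) := by
  rw [integral_univ_pi_Icc_eq_integral_tanh, ← integral_const_mul]
  congr 1 with t
  exact cosh_sinh_integrand_eq_tanh_integrand hb.le hι.le a ν _ t

theorem norm_transfer_change_of_variables (r : ℕ) (a ι b ν : ℝ)
    (ha : 0 < a) (hι : 0 < ι) (hb : 0 < b)
    (hν : ι + b + a * ((r : ℝ) - 1) < ν)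
    (P : (Fin r → ℝ) → ℝ) (hP : Continuous P)
    (hsymm : ∀ (σ : Equiv.Perm (Fin r)) (x : Fin r → ℝ), P (x ∘ σ) = P x) :
    ∫ t : Fin r → ℝ,
        ((∏ j, Real.cosh (t j) ^ (-2 * ν)) * P fun j => Real.tanh (t j)) ^ 2 *
          ((∏ j, |2 * Real.sinh (t j)| ^ (2 * b) * |2 * Real.sinh (2 * t j)| ^ ι) *
            ∏ p ∈ Finset.univ.filter fun p : Fin r × Fin r => p.1 < p.2,
              |2 * Real.sinh (t p.1 - t p.2)| ^ a * |2 * Real.sinh (t p.1 + t p.2)| ^ a)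
      = 2 ^ ((2 * ι + 2 * b + a * ((r : ℝ) - 1)) * r) *
          ∫ x in Set.univ.pi fun _ : Fin r => Set.Icc (-1 : ℝ) 1,
            P x ^ 2 *
              ((∏ p ∈ Finset.univ.filter fun p : Fin r × Fin r => p.1 < p.2,
                  |x p.1 ^ 2 - x p.2 ^ 2| ^ a) *
                (∏ j, |x j| ^ (2 * b + ι)) *
                ∏ j, (1 - x j ^ 2) ^ (2 * ν - (1 + ι + b + a * ((r : ℝ) - 1)))) :=
  norm_transfer_change_of_variables_general r a ι b ν hι hb P
end
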